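/- arXiv:2405.11875 — 4 statements merged into one kernel-verified Lean document; each statement's English description precedes it below -/
import Mathlib

section
/- Let M₀ and M₁ be the 3×3 rotation matrices M_k = [[cos ρ_k, sin ρ_k cos θ_k, sin ρ_k sin θ_k], [-sin ρ_k cos θ_k, cos ρ_k cos²θ_k + sin²θ_k, (cos ρ_k - 1) cos θ_k sin θ_k], [-sin ρ_k sin θ_k, (cos ρ_k - 1) cos θ_k sin θ_k, cos ρ_k sin²θ_k + cos²θ_k]] for k = 0, 1. Then trace(M₁ M₀) = -1 + 4 sin²(ρ₀/2) sin²(ρ₁/2) (cos(θ₀ - θ₁) - cot(ρ₀/2) cot(ρ₁/2))². -/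
/-!
`Mrot ρ θ` is the rotation by `ρ` about the unit axis `n(θ) = (0, -sin θ, cos θ)`, and
`n(θ₀) ⬝ n(θ₁) = cos (θ₀ - θ₁)`. Expanding the trace of a product of two Rodrigues matrices gives
`cos ρ₀ cos ρ₁ + cos ρ₀ + cos ρ₁ - 2 sin ρ₀ sin ρ₁ C + (1 - cos ρ₀)(1 - cos ρ₁) C²` with
`C = cos (θ₀ - θ₁)`; in half angles this is `-1 + 4 (cos cos - sin sin C)²`, the squared real part
of the product of the two unit quaternions, and dividing by the half-angle sines brings in the
cotangents.
-/

open Real Matrix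

/-- The rotation matrix `M_k` determined by the angles `ρ` and `θ`. -/
noncomputable def Mrot (ρ θ : ℝ) : Matrix (Fin 3) (Fin 3) ℝ :=
  !![Real.cos ρ, Real.sin ρ * Real.cos θ, Real.sin ρ * Real.sin θ;
     -Real.sin ρ * Real.cos θ, Real.cos ρ * Real.cos θ ^ 2 + Real.sin θ ^ 2,
       (Real.cos ρ - 1) * Real.cos θ * Real.sin θ;
     -Real.sin ρ * Real.sin θ, (Real.cos ρ - 1) * Real.cos θ * Real.sin θ,
       Real.cos ρ * Real.sin θ ^ 2 + Real.cos θ ^ 2]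

theorem trace_Mrot_mul_Mrot (ρ₀ ρ₁ θ₀ θ₁ : ℝ) :
    trace (Mrot ρ₁ θ₁ * Mrot ρ₀ θ₀) = cos ρ₀ * cos ρ₁ + cos ρ₀ + cos ρ₁
      - 2 * sin ρ₀ * sin ρ₁ * cos (θ₀ - θ₁)
      + (1 - cos ρ₀) * (1 - cos ρ₁) * cos (θ₀ - θ₁) ^ 2 := by
  simp only [Mrot, trace_fin_three, mul_apply, Fin.sum_univ_three, of_apply, cons_val',
    cons_val_zero, cons_val_one, cons_val_two, head_cons, tail_cons, empty_val',
    cons_val_fin_one, head_fin_const]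
  rw [cos_sub]
  -- The coefficients come from `cos ρ * x ^ 2 + y ^ 2 = 1 - (1 - cos ρ) * x ^ 2` when `x² + y² = 1`.
  linear_combination
    (2 - (1 - cos ρ₁) * (sin θ₁ ^ 2 + cos θ₁ ^ 2) - (1 - cos ρ₀)) * sin_sq_add_cos_sq θ₀
      + ((1 + cos ρ₀) * (sin θ₀ ^ 2 + cos θ₀ ^ 2) - (1 - cos ρ₁)) * sin_sq_add_cos_sq θ₁

theorem trace_Mrot_mul_Mrot_eq_half_angle (ρ₀ ρ₁ θ₀ θ₁ : ℝ) :
    trace (Mrot ρ₁ θ₁ * Mrot ρ₀ θ₀) = -1 + 4 * (cos (ρ₀ / 2) * cos (ρ₁ / 2)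
      - sin (ρ₀ / 2) * sin (ρ₁ / 2) * cos (θ₀ - θ₁)) ^ 2 := by
  have half (ρ : ℝ) : cos ρ = 2 * cos (ρ / 2) ^ 2 - 1 ∧ sin ρ = 2 * sin (ρ / 2) * cos (ρ / 2) := by
    rw [← cos_two_mul, ← sin_two_mul, mul_div_cancel₀ _ two_ne_zero]
    exact ⟨rfl, rfl⟩
  rw [trace_Mrot_mul_Mrot, (half ρ₀).1, (half ρ₀).2, (half ρ₁).1, (half ρ₁).2]
  linear_combination -4 * cos (θ₀ - θ₁) ^ 2 * ((1 - cos (ρ₁ / 2) ^ 2) * sin_sq_add_cos_sq (ρ₀ / 2)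
    + sin (ρ₀ / 2) ^ 2 * sin_sq_add_cos_sq (ρ₁ / 2))

/-- the trace of `M₁ M₀` equals
`-1 + 4 sin²(ρ₀/2) sin²(ρ₁/2)(cos(θ₀-θ₁) - cot(ρ₀/2)cot(ρ₁/2))²`. -/
theorem trace_M1_M0 (ρ₀ ρ₁ θ₀ θ₁ : ℝ)
    (h₀ : Real.sin (ρ₀ / 2) ≠ 0) (h₁ : Real.sin (ρ₁ / 2) ≠ 0) :
    Matrix.trace (Mrot ρ₁ θ₁ * Mrot ρ₀ θ₀)
      = -1 + 4 * Real.sin (ρ₀ / 2) ^ 2 * Real.sin (ρ₁ / 2) ^ 2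
          * (Real.cos (θ₀ - θ₁) - Real.cot (ρ₀ / 2) * Real.cot (ρ₁ / 2)) ^ 2 := by
  have clear_cot : sin (ρ₀ / 2) * sin (ρ₁ / 2) * (cos (θ₀ - θ₁) - cot (ρ₀ / 2) * cot (ρ₁ / 2))
      = sin (ρ₀ / 2) * sin (ρ₁ / 2) * cos (θ₀ - θ₁) - cos (ρ₀ / 2) * cos (ρ₁ / 2) := by
    rw [cot_eq_cos_div_sin, cot_eq_cos_div_sin]
    field_simp
  rw [trace_Mrot_mul_Mrot_eq_half_angle, mul_assoc 4, ← mul_pow, mul_assoc 4, ← mul_pow, clear_cot]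
  ring
end

section
/- Let X be a closed polygonal curve in ℝ³ of total length 2π with M vertices X₀,…,X_{M-1}, each side of length 2π/M with unit direction vectors T₀,…,T_{M-1} (so X_{k+1} = X_k + (2π/M) T_k and Σ_{k=0}^{M-1} T_k = 0). Then the fluid impulse F = (1/2)∫₀^{2π} X(s) ∧ T(s) ds equals F = 2(π/M)² Σ_{k=1}^{M-1} Σ_{l=0}^{k-1} T_l ∧ T_k; in particular F is independent of X₀. -/
open Real Matrix MeasureTheory intervalIntegral Finset

/-- the fluid impulse of a closed polygon of total length `2π` with `M`
sides, vertices `X_k` and unit direction vectors `T_k`, equals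
`2(π/M)² Σ_{k=1}^{M-1} Σ_{l=0}^{k-1} T_l ∧ T_k`; in particular it does not depend on
`X₀`. -/
theorem polygon_fluid_impulse (M : ℕ) (hM : 2 ≤ M)
    (Xv Tv : ℕ → Fin 3 → ℝ)
    (hunit : ∀ k < M, Tv k ⬝ᵥ Tv k = 1)
    (hside : ∀ k < M, Xv (k + 1) = Xv k + (2 * π / M) • Tv k)
    (hclosed : ∑ k ∈ Finset.range M, Tv k = 0) :
    (2 : ℝ)⁻¹ • ∑ k ∈ Finset.range M,
        (∫ s in (2 * π * k / M)..(2 * π * (k + 1) / M),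
          crossProduct (Xv k + (s - 2 * π * k / M) • Tv k) (Tv k))
      = (2 * (π / M) ^ 2) • ∑ k ∈ Finset.range M, ∑ l ∈ Finset.range k,
          crossProduct (Tv l) (Tv k) := by
  have hM0 : (M : ℝ) ≠ 0 := Nat.cast_ne_zero.mpr (by omega)
  -- each integrand is constant
  have hint : ∀ k : ℕ,
      (∫ s in (2 * π * k / M)..(2 * π * (k + 1) / M),
          crossProduct (Xv k + (s - 2 * π * k / M) • Tv k) (Tv k))
        = (2 * π / M) • crossProduct (Xv k) (Tv k) := by
    intro k
    have hconst : ∀ s : ℝ,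
        crossProduct (Xv k + (s - 2 * π * k / M) • Tv k) (Tv k)
          = crossProduct (Xv k) (Tv k) := by
      intro s
      simp [_root_.map_add, _root_.map_smul, LinearMap.add_apply, LinearMap.smul_apply, cross_self]
    simp_rw [hconst]
    rw [intervalIntegral.integral_const]
    congr 1
    field_simp
    ring
  -- vertex formula
  have hX : ∀ k ≤ M, Xv k = Xv 0 + (2 * π / M) • ∑ l ∈ Finset.range k, Tv l := by
    intro k hk
    induction k with
    | zero => simp
    | succ n ih =>
      rw [hside n (by omega), ih (by omega), Finset.sum_range_succ, smul_add]
      abel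
  have hstep : ∀ k ∈ Finset.range M,
      crossProduct (Xv k) (Tv k)
        = crossProduct (Xv 0) (Tv k)
          + (2 * π / M) • ∑ l ∈ Finset.range k, crossProduct (Tv l) (Tv k) := by
    intro k hk
    rw [hX k (le_of_lt (Finset.mem_range.mp hk))]
    simp [_root_.map_add, _root_.map_smul, LinearMap.add_apply, LinearMap.smul_apply,
      map_sum, LinearMap.sum_apply, Finset.smul_sum]
  calc (2 : ℝ)⁻¹ • ∑ k ∈ Finset.range M,
        (∫ s in (2 * π * k / M)..(2 * π * (k + 1) / M),
          crossProduct (Xv k + (s - 2 * π * k / M) • Tv k) (Tv k))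
      = (2 : ℝ)⁻¹ • ∑ k ∈ Finset.range M, (2 * π / M) • crossProduct (Xv k) (Tv k) := by
        rw [Finset.sum_congr rfl fun k _ => hint k]
    _ = (π / M) • ∑ k ∈ Finset.range M, crossProduct (Xv k) (Tv k) := by
        rw [← Finset.smul_sum, smul_smul]
        congr 1
        field_simp
    _ = (π / M) • (∑ k ∈ Finset.range M, crossProduct (Xv 0) (Tv k)
          + (2 * π / M) • ∑ k ∈ Finset.range M, ∑ l ∈ Finset.range k,
              crossProduct (Tv l) (Tv k)) := by
        rw [Finset.sum_congr rfl hstep, Finset.sum_add_distrib, ← Finset.smul_sum]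
    _ = (π / M) • ((2 * π / M) • ∑ k ∈ Finset.range M, ∑ l ∈ Finset.range k,
              crossProduct (Tv l) (Tv k)) := by
        have : ∑ k ∈ Finset.range M, crossProduct (Xv 0) (Tv k)
            = crossProduct (Xv 0) (∑ k ∈ Finset.range M, Tv k) := (map_sum _ _ _).symm
        rw [this, hclosed, map_zero, zero_add]
    _ = (2 * (π / M) ^ 2) • ∑ k ∈ Finset.range M, ∑ l ∈ Finset.range k,
          crossProduct (Tv l) (Tv k) := by
        rw [smul_smul]
        congr 1
        field_simp
end

section
/- Let T₀, T₁, T₂, T₃ be unit vectors in ℝ³ with T₀·T₁ = T₂·T₃ = cos ρ₀, T₀·T₃ = T₁·T₂ = cos ρ₁, and T₀·T₂ = T₁·T₃ = −1 − cos ρ₀ − cos ρ₁. Then |T₀∧T₁ + T₂∧T₃|² = 4(1 + cos ρ₀)(1 + cos ρ₁). -/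
open Matrix Real

/-- for unit vectors `T₀, T₁, T₂, T₃ ∈ ℝ³` with
`T₀·T₁ = T₂·T₃ = cos ρ₀`, `T₀·T₃ = T₁·T₂ = cos ρ₁`, and
`T₀·T₂ = T₁·T₃ = −1 − cos ρ₀ − cos ρ₁`, one has
`|T₀∧T₁ + T₂∧T₃|² = 4(1 + cos ρ₀)(1 + cos ρ₁)`. -/
theorem norm_sq_cross_sum_rhombus (T₀ T₁ T₂ T₃ : Fin 3 → ℝ) (ρ₀ ρ₁ : ℝ)
    (h₀ : T₀ ⬝ᵥ T₀ = 1) (h₁ : T₁ ⬝ᵥ T₁ = 1) (h₂ : T₂ ⬝ᵥ T₂ = 1) (h₃ : T₃ ⬝ᵥ T₃ = 1)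
    (h01 : T₀ ⬝ᵥ T₁ = Real.cos ρ₀) (h23 : T₂ ⬝ᵥ T₃ = Real.cos ρ₀)
    (h03 : T₀ ⬝ᵥ T₃ = Real.cos ρ₁) (h12 : T₁ ⬝ᵥ T₂ = Real.cos ρ₁)
    (h02 : T₀ ⬝ᵥ T₂ = -1 - Real.cos ρ₀ - Real.cos ρ₁)
    (h13 : T₁ ⬝ᵥ T₃ = -1 - Real.cos ρ₀ - Real.cos ρ₁) :
    (crossProduct T₀ T₁ + crossProduct T₂ T₃) ⬝ᵥ (crossProduct T₀ T₁ + crossProduct T₂ T₃)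
      = 4 * (1 + Real.cos ρ₀) * (1 + Real.cos ρ₁) := by
  set c₀ := Real.cos ρ₀; set c₁ := Real.cos ρ₁
  simp only [crossProduct, dotProduct, Fin.sum_univ_three, Pi.add_apply, cons_val_zero,
    cons_val_one, head_cons, cons_val_two, tail_cons, of_apply, cons_val', LinearMap.mk₂_apply] at *
  linear_combination (T₁ 0 * T₁ 0 + T₁ 1 * T₁ 1 + T₁ 2 * T₁ 2) * h₀ + h₁
    - (T₀ 0 * T₁ 0 + T₀ 1 * T₁ 1 + T₀ 2 * T₁ 2 + c₀) * h01
    + 2 * (T₁ 0 * T₃ 0 + T₁ 1 * T₃ 1 + T₁ 2 * T₃ 2) * h02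
    + 2 * (-1 - c₀ - c₁) * h13
    - 2 * (T₁ 0 * T₂ 0 + T₁ 1 * T₂ 1 + T₁ 2 * T₂ 2) * h03 - 2 * c₁ * h12
    + (T₃ 0 * T₃ 0 + T₃ 1 * T₃ 1 + T₃ 2 * T₃ 2) * h₂ + h₃
    - (T₂ 0 * T₃ 0 + T₂ 1 * T₃ 1 + T₂ 2 * T₃ 2 + c₀) * h23
end

section
/- For any smooth solution X(s,t) of the modified vortex filament equation X_t = (X_s ∧ X_ss)/|X_s|³ − (ε x₁/(x₁² + r_c²)) (X_s ∧ e₁)/|X_s|, the quantity c(s) = |X_s(s,t)| (x₁²(s,t) + r_c²)^{ε/2} is independent of t; equivalently, ∂_t [ |X_s|² (x₁² + r_c²)^ε ] = 0. -/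
open Real

/-- The cross product on `ℝ³` (as `EuclideanSpace ℝ (Fin 3)`). -/
noncomputable def cross3 (u v : EuclideanSpace ℝ (Fin 3)) : EuclideanSpace ℝ (Fin 3) :=
  (WithLp.equiv 2 (Fin 3 → ℝ)).symm
    ![u 1 * v 2 - u 2 * v 1, u 2 * v 0 - u 0 * v 2, u 0 * v 1 - u 1 * v 0]

/-- The first basis vector `e₁ = (1,0,0)` of `ℝ³`. -/
noncomputable def e₁ : EuclideanSpace ℝ (Fin 3) :=
  (WithLp.equiv 2 (Fin 3 → ℝ)).symm ![1, 0, 0]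

lemma inner_cross3_left (u v : EuclideanSpace ℝ (Fin 3)) :
    (inner ℝ u (cross3 u v) : ℝ) = 0 := by
  simp only [PiLp.inner_apply, RCLike.inner_apply, conj_trivial, Fin.sum_univ_three, cross3,
    WithLp.equiv_symm_apply, PiLp.toLp_apply, Matrix.cons_val_zero, Matrix.cons_val_one, Matrix.head_cons,
    Matrix.cons_val_two, Matrix.tail_cons]
  ring

lemma inner_cross3_right (u v : EuclideanSpace ℝ (Fin 3)) :
    (inner ℝ v (cross3 u v) : ℝ) = 0 := by
  simp only [PiLp.inner_apply, RCLike.inner_apply, conj_trivial, Fin.sum_univ_three, cross3,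
    WithLp.equiv_symm_apply, PiLp.toLp_apply, Matrix.cons_val_zero, Matrix.cons_val_one, Matrix.head_cons,
    Matrix.cons_val_two, Matrix.tail_cons]
  ring

lemma inner_cross3_e₁ (u w : EuclideanSpace ℝ (Fin 3)) :
    (inner ℝ w (cross3 u e₁) : ℝ) = w 1 * u 2 - w 2 * u 1 := by
  simp only [PiLp.inner_apply, RCLike.inner_apply, conj_trivial, Fin.sum_univ_three, cross3, e₁,
    WithLp.equiv_symm_apply, PiLp.toLp_apply, Matrix.cons_val_zero, Matrix.cons_val_one, Matrix.head_cons,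
    Matrix.cons_val_two, Matrix.tail_cons]
  ring

lemma cross3_apply_zero (u v : EuclideanSpace ℝ (Fin 3)) :
    cross3 u v 0 = u 1 * v 2 - u 2 * v 1 := rfl

lemma cross3_e₁_apply_zero (u : EuclideanSpace ℝ (Fin 3)) :
    cross3 u e₁ 0 = 0 := by
  show u 1 * e₁ 2 - u 2 * e₁ 1 = 0
  have h1 : e₁ 1 = 0 := rfl
  have h2 : e₁ 2 = 0 := rfl
  rw [h1, h2]; ring

lemma hasDerivAt_partial1 {G : Type*} [NormedAddCommGroup G] [NormedSpace ℝ G]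
    {F : ℝ × ℝ → G} (hF : Differentiable ℝ F) (s t : ℝ) :
    HasDerivAt (fun σ => F (σ, t)) (fderiv ℝ F (s, t) (1, 0)) s := by
  have h := (hF (s, t)).hasFDerivAt.comp_hasDerivAt s
    ((hasDerivAt_id s).prodMk (hasDerivAt_const s t))
  exact h

lemma hasDerivAt_partial2 {G : Type*} [NormedAddCommGroup G] [NormedSpace ℝ G]
    {F : ℝ × ℝ → G} (hF : Differentiable ℝ F) (s t : ℝ) :
    HasDerivAt (fun τ => F (s, τ)) (fderiv ℝ F (s, t) (0, 1)) t := by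
  have h := (hF (s, t)).hasFDerivAt.comp_hasDerivAt t
    ((hasDerivAt_const t s).prodMk (hasDerivAt_id t))
  exact h

/-- for a smooth solution of the modified vortex filament equation
`X_t = (X_s ∧ X_ss)/|X_s|³ − (ε x₁/(x₁² + r_c²)) (X_s ∧ e₁)/|X_s|`, the quantity
`|X_s|² (x₁² + r_c²)^ε` is independent of time: `∂_t [|X_s|² (x₁² + r_c²)^ε] = 0`. -/
theorem modified_vfe_conserved (X : ℝ → ℝ → EuclideanSpace ℝ (Fin 3)) (ε rc : ℝ)
    (hε : 0 < ε) (hrc : 0 < rc)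
    (hsmooth : ContDiff ℝ (⊤ : ℕ∞) (fun p : ℝ × ℝ => X p.1 p.2))
    (hXs : ∀ s t : ℝ, deriv (fun σ => X σ t) s ≠ 0)
    (hPDE : ∀ s t : ℝ, deriv (fun τ => X s τ) t
      = (‖deriv (fun σ => X σ t) s‖ ^ 3)⁻¹
          • cross3 (deriv (fun σ => X σ t) s) (deriv (deriv (fun σ => X σ t)) s)
        - (ε * (X s t 0) / ((X s t 0) ^ 2 + rc ^ 2))
          • ((‖deriv (fun σ => X σ t) s‖)⁻¹ • cross3 (deriv (fun σ => X σ t) s) e₁)) :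
    ∀ s t : ℝ,
      deriv (fun τ => ‖deriv (fun σ => X σ τ) s‖ ^ 2 * ((X s τ 0) ^ 2 + rc ^ 2) ^ ε) t
        = 0 := by
  intro s t
  have hF : ContDiff ℝ (⊤ : ℕ∞) (fun p : ℝ × ℝ => X p.1 p.2) := hsmooth
  set F : ℝ × ℝ → EuclideanSpace ℝ (Fin 3) := fun p => X p.1 p.2 with hFdef
  have hFd : Differentiable ℝ F := hF.differentiable (by simp)
  set A : ℝ × ℝ → EuclideanSpace ℝ (Fin 3) := fun p => fderiv ℝ F p (1, 0) with hAdef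
  set B : ℝ × ℝ → EuclideanSpace ℝ (Fin 3) := fun p => fderiv ℝ F p (0, 1) with hBdef
  have h1le : (1 : WithTop ℕ∞) ≤ (⊤ : ℕ∞) := by exact_mod_cast le_top
  have hfd2 : ContDiff ℝ ((⊤ : ℕ∞) : WithTop ℕ∞) (fderiv ℝ F) := hF.fderiv_right (by simp)
  have hA : Differentiable ℝ A := (hfd2.clm_apply contDiff_const).differentiable (by simp)
  have hB : Differentiable ℝ B := (hfd2.clm_apply contDiff_const).differentiable (by simp)
  have hfd2d : Differentiable ℝ (fderiv ℝ F) := hfd2.differentiable (by simp)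
  -- fderivs of A and B
  have hAf : ∀ p : ℝ × ℝ,
      HasFDerivAt A ((fderiv ℝ (fderiv ℝ F) p).flip ((1 : ℝ), (0 : ℝ))) p := by
    intro p
    have h := ((hfd2d p).hasFDerivAt).clm_apply (hasFDerivAt_const ((1 : ℝ), (0 : ℝ)) p)
    simpa using h
  have hBf : ∀ p : ℝ × ℝ,
      HasFDerivAt B ((fderiv ℝ (fderiv ℝ F) p).flip ((0 : ℝ), (1 : ℝ))) p := by
    intro p
    have h := ((hfd2d p).hasFDerivAt).clm_apply (hasFDerivAt_const ((0 : ℝ), (1 : ℝ)) p)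
    simpa using h
  -- partial derivatives expressed through A and B
  have hderiv1 : ∀ σ τ : ℝ, deriv (fun σ' => X σ' τ) σ = A (σ, τ) := fun σ τ =>
    (hasDerivAt_partial1 hFd σ τ).deriv
  have hderiv2 : ∀ σ τ : ℝ, deriv (fun τ' => X σ τ') τ = B (σ, τ) := fun σ τ =>
    (hasDerivAt_partial2 hFd σ τ).deriv
  have hderiv11 : ∀ σ τ : ℝ, deriv (deriv (fun σ' => X σ' τ)) σ = fderiv ℝ A (σ, τ) (1, 0) := by
    intro σ τ
    have hfun : deriv (fun σ' => X σ' τ) = fun σ' => A (σ', τ) := funext fun σ' => hderiv1 σ' τ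
    rw [hfun]
    exact (hasDerivAt_partial1 hA σ τ).deriv
  -- the PDE in terms of A and B
  have hPDE' : ∀ σ τ : ℝ, B (σ, τ) =
      (‖A (σ, τ)‖ ^ 3)⁻¹ • cross3 (A (σ, τ)) (fderiv ℝ A (σ, τ) (1, 0))
      - (ε * (X σ τ 0) / ((X σ τ 0) ^ 2 + rc ^ 2))
          • ((‖A (σ, τ)‖)⁻¹ • cross3 (A (σ, τ)) e₁) := by
    intro σ τ
    rw [← hderiv2 σ τ, hPDE σ τ, hderiv1, hderiv11]
  -- orthogonality of A and B
  have horth : ∀ σ : ℝ, (inner ℝ (A (σ, t)) (B (σ, t)) : ℝ) = 0 := by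
    intro σ
    rw [hPDE' σ t, inner_sub_right, inner_smul_right, inner_smul_right, inner_smul_right,
      inner_cross3_left, inner_cross3_left]
    ring
  -- symmetry of second derivatives
  have hsymm : IsSymmSndFDerivAt ℝ F (s, t) :=
    (hF.contDiffAt).isSymmSndFDerivAt (by simp; exact WithTop.coe_le_coe.mpr le_top)
  have hAB : fderiv ℝ A (s, t) (0, 1) = fderiv ℝ B (s, t) (1, 0) := by
    rw [(hAf (s, t)).fderiv, (hBf (s, t)).fderiv]
    simpa using hsymm ((0 : ℝ), (1 : ℝ)) ((1 : ℝ), (0 : ℝ))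
  -- derivative of the (identically zero) inner product in σ
  have hABs : HasDerivAt (fun σ' => A (σ', t)) (fderiv ℝ A (s, t) (1, 0)) s :=
    hasDerivAt_partial1 hA s t
  have hBs : HasDerivAt (fun σ' => B (σ', t)) (fderiv ℝ B (s, t) (1, 0)) s :=
    hasDerivAt_partial1 hB s t
  have hinner0 : (inner ℝ (A (s, t)) (fderiv ℝ B (s, t) (1, 0)) : ℝ)
      + (inner ℝ (fderiv ℝ A (s, t) (1, 0)) (B (s, t)) : ℝ) = 0 := by
    have h := (HasDerivAt.inner ℝ hABs hBs).deriv
    have h2 : (fun σ => (inner ℝ (A (σ, t)) (B (σ, t)) : ℝ)) = fun _ => (0 : ℝ) := funext horth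
    rw [h2] at h
    simpa using h.symm
  -- names for the relevant quantities
  set vs : EuclideanSpace ℝ (Fin 3) := A (s, t) with hvs
  set vss : EuclideanSpace ℝ (Fin 3) := fderiv ℝ A (s, t) (1, 0) with hvss
  set dA : EuclideanSpace ℝ (Fin 3) := fderiv ℝ A (s, t) (0, 1) with hdA
  set b : EuclideanSpace ℝ (Fin 3) := B (s, t) with hb
  set x : ℝ := X s t 0 with hx
  set m : ℝ := x ^ 2 + rc ^ 2 with hm
  have hmpos : 0 < m := by positivity
  have hn : vs ≠ 0 := by
    rw [hvs, ← hderiv1 s t]; exact hXs s t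
  have hnn : ‖vs‖ ≠ 0 := norm_ne_zero_iff.mpr hn
  -- key identities
  have hinner_b : (inner ℝ vss b : ℝ)
      = -((ε * x / m) * (‖vs‖⁻¹ * (vss 1 * vs 2 - vss 2 * vs 1))) := by
    rw [hb, hPDE' s t, inner_sub_right, inner_smul_right, inner_smul_right, inner_smul_right,
      inner_cross3_right, inner_cross3_e₁]
    ring
  have hinner_dA : (inner ℝ vs dA : ℝ) = -(inner ℝ vss b : ℝ) := by
    rw [hAB]
    linarith [hinner0]
  have hb0 : b 0 = (‖vs‖ ^ 3)⁻¹ * (vs 1 * vss 2 - vs 2 * vss 1) := by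
    rw [hb, hPDE' s t]
    have : ((‖A (s, t)‖ ^ 3)⁻¹ • cross3 (A (s, t)) (fderiv ℝ A (s, t) (1, 0))
        - (ε * (X s t 0) / ((X s t 0) ^ 2 + rc ^ 2))
          • ((‖A (s, t)‖)⁻¹ • cross3 (A (s, t)) e₁)) 0
        = (‖A (s, t)‖ ^ 3)⁻¹ * (cross3 (A (s, t)) (fderiv ℝ A (s, t) (1, 0)) 0)
          - (ε * (X s t 0) / ((X s t 0) ^ 2 + rc ^ 2))
            * ((‖A (s, t)‖)⁻¹ * (cross3 (A (s, t)) e₁ 0)) := rfl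
    rw [this, cross3_apply_zero, cross3_e₁_apply_zero]
    rw [← hvs, ← hvss]
    ring
  -- time derivatives
  have hwA : HasDerivAt (fun τ => A (s, τ)) dA t := hasDerivAt_partial2 hA s t
  have hg : HasDerivAt (fun τ => ‖A (s, τ)‖ ^ 2)
      ((inner ℝ vs dA : ℝ) + (inner ℝ dA vs : ℝ)) t := by
    have h := HasDerivAt.inner ℝ hwA hwA
    have h2 : (fun τ => (inner ℝ (A (s, τ)) (A (s, τ)) : ℝ)) = fun τ => ‖A (s, τ)‖ ^ 2 :=
      funext fun τ => real_inner_self_eq_norm_sq _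
    rw [h2] at h
    exact h
  have hx1 : HasDerivAt (fun τ => X s τ 0) (b 0) t := by
    have h := (EuclideanSpace.proj (𝕜 := ℝ) (0 : Fin 3)).hasFDerivAt.comp_hasDerivAt t
      (hasDerivAt_partial2 hFd s t)
    exact h
  have hq : HasDerivAt (fun τ => (X s τ 0) ^ 2 + rc ^ 2) (2 * x * b 0) t := by
    have h := (hx1.pow 2).add_const (rc ^ 2)
    simpa [hx] using h
  have hqε : HasDerivAt (fun τ => ((X s τ 0) ^ 2 + rc ^ 2) ^ ε)
      ((2 * x * b 0) * ε * m ^ (ε - 1)) t :=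
    hq.rpow_const (Or.inl (ne_of_gt hmpos))
  have htotal : HasDerivAt
      (fun τ => ‖A (s, τ)‖ ^ 2 * ((X s τ 0) ^ 2 + rc ^ 2) ^ ε)
      (((inner ℝ vs dA : ℝ) + (inner ℝ dA vs : ℝ)) * (m ^ ε)
        + ‖vs‖ ^ 2 * ((2 * x * b 0) * ε * m ^ (ε - 1))) t := by
    have h := hg.mul hqε
    exact h
  have hfun : (fun τ => ‖deriv (fun σ => X σ τ) s‖ ^ 2 * ((X s τ 0) ^ 2 + rc ^ 2) ^ ε)
      = (fun τ => ‖A (s, τ)‖ ^ 2 * ((X s τ 0) ^ 2 + rc ^ 2) ^ ε) := by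
    funext τ
    rw [hderiv1]
  rw [hfun, htotal.deriv]
  -- final algebra
  rw [real_inner_comm vs dA, hinner_dA, hinner_b, hb0,
    Real.rpow_sub hmpos, Real.rpow_one]
  field_simp
  ring
end
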